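/- arXiv:2205.13062 — 3 statements merged into one kernel-verified Lean document; each statement's English description precedes it below -/
import Mathlib

section
/- For all z, α, β, θ ∈ ℂ with Re α > 0, the series ∑_{n=0}^∞ ((θ)_n/Γ(αn+β))·z^n/n! defining the three-parameter Mittag-Leffler function E^θ_{α,β}(z) is absolutely convergent (the family of terms is summable); hence E^θ_{α,β} is well-defined on all of ℂ. -/
/-!
Since `‖(θ)ₙ‖ ≤ (1 + ‖θ‖)ⁿ n!`, the series is dominated by a geometric one as soon as
`‖Γ(αn + β)‖` eventually exceeds `Rⁿ` for every `R`. On the real axis `Γ(an + b)` dominates a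
factorial of an index proportional to `n`. The imaginary part costs at most a factor exponential
in `n`: in Euler's product `Γ(s) = lim nˢ n! / ∏_{j ≤ n} (s + j)` each factor satisfies
`‖s + j‖ ≤ (x + j) exp (y² / 2(x + j)²)` for `s = x + iy`, and `∑ⱼ (x + j)⁻² ≤ 2 / x`, so
`‖Γ(s)‖ ≥ Γ(x) exp (-y² / x)`; for `s = αn + β` the exponent `y² / x` is `O(n)`.
-/

open MeasureTheory Set Filter Topology

noncomputable section

/-- Pochhammer symbol `(θ)ₙ = θ(θ+1)⋯(θ+n−1)`. -/
def cpoch (θ : ℂ) (n : ℕ) : ℂ := ∏ k ∈ Finset.range n, (θ + k)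

open scoped Nat

lemma sum_range_inv_add_natCast_sq_le {x : ℝ} (hx : 1 ≤ x) (N : ℕ) :
    ∑ j ∈ Finset.range N, ((x + j) ^ 2)⁻¹ ≤ 2 / x := by
  set f : ℕ → ℝ := fun j => 2 / (2 * (x + j) - 1)
  -- `1 / y ^ 2 ≤ 1 / (y ^ 2 - 1 / 4) = f j - f (j + 1)` for `y = x + j`
  have hstep (j : ℕ) : ((x + j) ^ 2)⁻¹ ≤ f j - f (j + 1) := by
    have hj : 0 < 2 * (x + j) - 1 := by linarith [j.cast_nonneg (α := ℝ)]
    simp only [f, Nat.cast_add_one]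
    rw [div_sub_div _ _ hj.ne' (by linarith), inv_eq_one_div,
      div_le_div_iff₀ (by positivity) (by nlinarith)]
    nlinarith
  calc ∑ j ∈ Finset.range N, ((x + j) ^ 2)⁻¹
      ≤ ∑ j ∈ Finset.range N, (f j - f (j + 1)) := Finset.sum_le_sum fun j _ => hstep j
    _ = f 0 - f N := Finset.sum_range_sub' f N
    _ ≤ f 0 := sub_le_self _ (div_nonneg zero_le_two (by linarith [N.cast_nonneg (α := ℝ)]))
    _ ≤ 2 / x := by
      simp only [f, Nat.cast_zero, add_zero]
      rw [div_le_div_iff₀ (by linarith) (by linarith)]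
      linarith

lemma Complex.norm_le_re_mul_exp {w : ℂ} (hw : 0 < w.re) :
    ‖w‖ ≤ w.re * Real.exp (w.im ^ 2 / (2 * w.re ^ 2)) := by
  rw [Complex.norm_eq_sqrt_sq_add_sq, Real.sqrt_le_iff]
  refine ⟨by positivity, ?_⟩
  rw [mul_pow, ← Real.exp_nat_mul]
  calc w.re ^ 2 + w.im ^ 2 = w.re ^ 2 * (2 * (w.im ^ 2 / (2 * w.re ^ 2)) + 1) := by
        field_simp; ring
    _ ≤ w.re ^ 2 * Real.exp (2 * (w.im ^ 2 / (2 * w.re ^ 2))) := by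
        gcongr
        linarith [Real.add_one_le_exp (2 * (w.im ^ 2 / (2 * w.re ^ 2)))]
    _ = _ := by norm_num

lemma Complex.GammaSeq_re_mul_exp_le_norm_GammaSeq {s : ℂ} (hs : 1 ≤ s.re) (n : ℕ) :
    Real.GammaSeq s.re n * Real.exp (-(s.im ^ 2 / s.re)) ≤ ‖Complex.GammaSeq s n‖ := by
  have hre (j : ℕ) : 0 < s.re + j := by positivity
  have hprod : ∏ j ∈ Finset.range (n + 1), ‖s + j‖
      ≤ (∏ j ∈ Finset.range (n + 1), (s.re + j)) * Real.exp (s.im ^ 2 / s.re) :=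
    calc ∏ j ∈ Finset.range (n + 1), ‖s + j‖
        ≤ ∏ j ∈ Finset.range (n + 1), (s.re + j) * Real.exp (s.im ^ 2 / (2 * (s.re + j) ^ 2)) :=
          Finset.prod_le_prod (fun _ _ => norm_nonneg _) fun j _ => by
            simpa using Complex.norm_le_re_mul_exp (w := s + j) (by simpa using hre j)
      _ = (∏ j ∈ Finset.range (n + 1), (s.re + j)) *
            Real.exp (s.im ^ 2 / 2 * ∑ j ∈ Finset.range (n + 1), ((s.re + j) ^ 2)⁻¹) := by
          rw [Finset.prod_mul_distrib, ← Real.exp_sum, Finset.mul_sum]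
          exact congrArg (_ * Real.exp ·) (Finset.sum_congr rfl fun j _ => by field_simp)
      _ ≤ _ := by
          gcongr
          calc s.im ^ 2 / 2 * ∑ j ∈ Finset.range (n + 1), ((s.re + j) ^ 2)⁻¹
              ≤ s.im ^ 2 / 2 * (2 / s.re) := by
                gcongr; exact sum_range_inv_add_natCast_sq_le hs _
            _ = s.im ^ 2 / s.re := by ring
  have hpos : 0 < ∏ j ∈ Finset.range (n + 1), ‖s + j‖ :=
    Finset.prod_pos fun j _ => (hre j).trans_le (by simpa using Complex.re_le_norm (s + j))
  rw [Complex.GammaSeq, Real.GammaSeq, norm_div, norm_mul, norm_prod,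
    Complex.norm_natCast_cpow_of_re_ne_zero _ (by linarith), Complex.norm_natCast,
    Real.exp_neg, ← div_eq_mul_inv, div_div]
  gcongr

lemma Complex.Gamma_re_mul_exp_le_norm_Gamma {s : ℂ} (hs : 1 ≤ s.re) :
    Real.Gamma s.re * Real.exp (-(s.im ^ 2 / s.re)) ≤ ‖Complex.Gamma s‖ :=
  le_of_tendsto_of_tendsto' ((Real.GammaSeq_tendsto_Gamma _).mul_const _)
    (Complex.GammaSeq_tendsto_Gamma s).norm (Complex.GammaSeq_re_mul_exp_le_norm_GammaSeq hs)

lemma Real.eventually_pow_le_Gamma_mul_add {a : ℝ} (ha : 0 < a) (b R : ℝ) :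
    ∀ᶠ n : ℕ in atTop, R ^ n ≤ Real.Gamma (a * n + b) := by
  obtain ⟨N, hN⟩ := exists_nat_ge (2 / a)
  have hN0 : N ≠ 0 := by rintro rfl; simp at hN; linarith [div_pos two_pos ha]
  have haN : 2 ≤ a * N := by rwa [div_le_iff₀' ha] at hN
  set Q := |R| + 1
  have hfac : ∀ᶠ m : ℕ in atTop, (Q ^ N) ^ (m + 1) ≤ ((m + 1)! : ℝ) := by
    have h := (FloorSemiring.tendsto_pow_div_factorial_atTop (Q ^ N)).eventually
      (gt_mem_nhds one_pos)
    filter_upwards [(tendsto_add_atTop_nat 1).eventually h] with m hm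
    rw [div_lt_one (by positivity)] at hm
    exact hm.le
  have hdiv := Nat.tendsto_div_const_atTop hN0
  filter_upwards [hdiv.eventually hfac, hdiv.eventually_ge_atTop ⌈2 - b⌉₊] with n hΓ hb
  set m := n / N
  have hmn : (N * m : ℝ) ≤ n := by exact_mod_cast Nat.mul_div_le n N
  have hm : (m + 2 : ℝ) ≤ a * n + b := by
    have hmb := Nat.ceil_le.1 hb
    nlinarith
  calc R ^ n ≤ Q ^ n := (le_abs_self _).trans (by rw [abs_pow]; gcongr; linarith)
    _ ≤ Q ^ (N * (m + 1)) := pow_le_pow_right₀ (by linarith [abs_nonneg R])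
        (Nat.lt_mul_div_succ n (Nat.pos_of_ne_zero hN0)).le
    _ = (Q ^ N) ^ (m + 1) := pow_mul Q N (m + 1)
    _ ≤ ((m + 1)! : ℝ) := hΓ
    _ = Real.Gamma (m + 2) := by
        rw [← Real.Gamma_nat_eq_factorial, Nat.cast_add_one, add_assoc, one_add_one_eq_two]
    _ ≤ Real.Gamma (a * n + b) := Real.Gamma_strictMonoOn_Ici.monotoneOn
        (Set.mem_Ici.2 (by linarith [m.cast_nonneg (α := ℝ)]))
        (Set.mem_Ici.2 (by linarith [m.cast_nonneg (α := ℝ)])) hm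

lemma Complex.eventually_pow_le_norm_Gamma_mul_add {α : ℂ} (hα : 0 < α.re) (β : ℂ) (R : ℝ) :
    ∀ᶠ n : ℕ in atTop, R ^ n ≤ ‖Complex.Gamma (α * n + β)‖ := by
  set c := |α.im| + |β.im|
  set C := 2 * c ^ 2 / α.re
  have hre_atTop : Tendsto (fun n : ℕ => α.re / 2 * n + β.re) atTop atTop :=
    tendsto_atTop_add_const_right _ _ <|
      tendsto_natCast_atTop_atTop.const_mul_atTop (half_pos hα)
  filter_upwards [Real.eventually_pow_le_Gamma_mul_add hα β.re (R * Real.exp C),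
    hre_atTop.eventually_ge_atTop 1, eventually_ge_atTop 1] with n hΓ hb hn
  set s := α * n + β
  have hs_re : s.re = α.re * n + β.re := by simp [s]
  have hs_im : s.im = α.im * n + β.im := by simp [s]
  have hs1 : 1 ≤ s.re := by nlinarith [n.cast_nonneg (α := ℝ)]
  have hs_half : α.re / 2 * n ≤ s.re := by linarith
  have hn1 : (1 : ℝ) ≤ n := by exact_mod_cast hn
  have him : |s.im| ≤ c * n := by
    rw [hs_im]
    calc |α.im * n + β.im| ≤ |α.im| * n + |β.im| := by
          simpa [abs_mul] using abs_add_le (α.im * n) β.im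
      _ ≤ c * n := by nlinarith [abs_nonneg β.im]
  have hexp : s.im ^ 2 / s.re ≤ C * n := by
    rw [div_le_iff₀ (by linarith)]
    calc s.im ^ 2 ≤ (c * n) ^ 2 := by rw [← sq_abs]; gcongr
      _ = C * n * (α.re / 2 * n) := by simp only [C]; field_simp
      _ ≤ C * n * s.re := by gcongr
  rw [← hs_re] at hΓ
  calc R ^ n = (R * Real.exp C) ^ n * Real.exp (-(C * n)) := by
        rw [mul_pow, ← Real.exp_nat_mul, mul_assoc, ← Real.exp_add]; ring_nf; simp
    _ ≤ Real.Gamma s.re * Real.exp (-(s.im ^ 2 / s.re)) := by gcongr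
    _ ≤ ‖Complex.Gamma s‖ := Complex.Gamma_re_mul_exp_le_norm_Gamma hs1

lemma norm_cpoch_le (θ : ℂ) (n : ℕ) : ‖cpoch θ n‖ ≤ (1 + ‖θ‖) ^ n * n ! := by
  rw [cpoch, norm_prod]
  calc ∏ k ∈ Finset.range n, ‖θ + k‖ ≤ ∏ k ∈ Finset.range n, (1 + ‖θ‖) * (k + 1) := by
        gcongr with k
        calc ‖θ + k‖ ≤ ‖θ‖ + k := by simpa using norm_add_le θ k
          _ ≤ (1 + ‖θ‖) * (k + 1) := by nlinarith [k.cast_nonneg (α := ℝ), norm_nonneg θ]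
    _ = (1 + ‖θ‖) ^ n * n ! := by
        rw [Finset.prod_mul_distrib, Finset.prod_const, Finset.card_range,
          ← Finset.prod_range_add_one_eq_factorial]
        push_cast
        rfl

/-- For all `z, α, β, θ ∈ ℂ` with `Re α > 0`, the series
`∑ (θ)ₙ/Γ(αn+β) · zⁿ/n!` defining the three-parameter Mittag-Leffler function
`E^θ_{α,β}(z)` is (absolutely) summable; hence `E^θ_{α,β}` is well-defined on `ℂ`.
Here `1/Γ` is the entire reciprocal Gamma function. -/
theorem mittagLeffler_three_param_summable (z α β θ : ℂ) (hα : 0 < α.re) :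
    Summable (fun n : ℕ =>
      cpoch θ n * (Complex.Gamma (α * n + β))⁻¹ * z ^ n / (n.factorial : ℂ)) := by
  set q := (1 + ‖θ‖) * ‖z‖
  have hq : q / (q + 1) < 1 := (div_lt_one (by positivity)).2 (lt_add_one q)
  refine .of_norm_bounded_eventually_nat (summable_geometric_of_lt_one (by positivity) hq) ?_
  filter_upwards [Complex.eventually_pow_le_norm_Gamma_mul_add hα β (q + 1)] with n hΓ
  calc ‖cpoch θ n * (Complex.Gamma (α * n + β))⁻¹ * z ^ n / (n ! : ℂ)‖
      = ‖cpoch θ n‖ * ‖Complex.Gamma (α * n + β)‖⁻¹ * ‖z‖ ^ n / n ! := by simp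
    _ ≤ (1 + ‖θ‖) ^ n * n ! * ((q + 1) ^ n)⁻¹ * ‖z‖ ^ n / n ! := by
        gcongr
        exact norm_cpoch_le θ n
    _ = (q / (q + 1)) ^ n := by
        field_simp
        rw [div_pow, mul_pow]

end
end

section
/- Let α, β, θ, ω ∈ ℂ with Re α > 0 and Re β > 0, let a < b be reals, and let f : [a,b] → ℂ be continuous. Then for every t ∈ [a,b], (𝕀^θ_{α,β,ω;a}f)(t) = ∑_{n=0}^∞ ((θ)_n ω^n/n!) (I^{αn+β}_a f)(t), the series on the right being convergent (series formula for the Prabhakar integral in terms of Riemann–Liouville integrals). -/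
open MeasureTheory Set Filter Topology

noncomputable section

/-- Three-parameter (Prabhakar) Mittag-Leffler function; `1/Γ` is used as an entire function. -/
def mlThree (α β θ : ℂ) (z : ℂ) : ℂ :=
  ∑' n : ℕ, cpoch θ n * (Complex.Gamma (α * n + β))⁻¹ * z ^ n / (n.factorial : ℂ)

/-- Prabhakar fractional integral with base point `a`:
`(𝕀^θ_{α,β,ω;a} f)(t) = ∫_a^t (t−s)^{β−1} E^θ_{α,β}(ω(t−s)^α) f(s) ds`. -/
def prabI (α β θ ω : ℂ) (a : ℝ) (f : ℝ → ℂ) (t : ℝ) : ℂ :=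
  ∫ s in a..t, ((t - s : ℝ) : ℂ) ^ (β - 1) * mlThree α β θ (ω * ((t - s : ℝ) : ℂ) ^ α) * f s

/-- `m = ⌊Re β⌋ + 1`. -/
def mOrd (β : ℂ) : ℕ := ⌊β.re⌋.toNat + 1

/-- Riemann–Liouville-type Prabhakar derivative:
`(D^{RL,θ}_{α,β,ω;a} f)(t) = (d/dt)^m (𝕀^{−θ}_{α,m−β,ω;a} f)(t)` with `m = ⌊Re β⌋+1`. -/
def prabDRL (α β θ ω : ℂ) (a : ℝ) (f : ℝ → ℂ) : ℝ → ℂ :=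
  iteratedDeriv (mOrd β) (prabI α ((mOrd β : ℕ) - β) (-θ) ω a f)

/-- Caputo-type Prabhakar derivative, via the `m`-th derivative of `f`:
`(D^{C,θ}_{α,β,ω;a} f)(t) = (𝕀^{−θ}_{α,m−β,ω;a} f^{(m)})(t)`. -/
def prabDC (α β θ ω : ℂ) (a : ℝ) (f : ℝ → ℂ) : ℝ → ℂ :=
  prabI α ((mOrd β : ℕ) - β) (-θ) ω a (iteratedDeriv (mOrd β) f)

/-- Regularized (Caputo-type) Prabhakar derivative of a continuous function:
`(D^{C,θ}_{α,β,ω;a} f)(t) = (D^{RL,θ}_{α,β,ω;a}[f − ∑_{j<m} f^{(j)}(a)(·−a)^j/j!])(t)`,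
where `f^{(j)}(a)` is the (right-sided) `j`-th derivative at `a`. -/
def prabDReg (α β θ ω : ℂ) (a : ℝ) (f : ℝ → ℂ) : ℝ → ℂ :=
  prabDRL α β θ ω a
    (fun t => f t - ∑ j ∈ Finset.range (mOrd β),
      iteratedDerivWithin j f (Set.Ici a) a / (j.factorial : ℂ) * ((t - a : ℝ) : ℂ) ^ j)

/-- Riemann–Liouville fractional integral
`(I^β_a f)(t) = (1/Γ(β)) ∫_a^t (t−s)^{β−1} f(s) ds`. -/
def rlI (β : ℂ) (a : ℝ) (f : ℝ → ℂ) (t : ℝ) : ℂ :=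
  (Complex.Gamma β)⁻¹ * ∫ s in a..t, ((t - s : ℝ) : ℂ) ^ (β - 1) * f s

/-- The operator `(A w)(t) = ∑_{i=1}^m σᵢ(t) · (𝕀^{θ₀−θᵢ}_{α,β₀−βᵢ,ω;0} w)(t)`. -/
def opA (α ω : ℂ) (β θ : ℕ → ℂ) (m : ℕ) (σ : ℕ → ℝ → ℂ) (w : ℝ → ℂ) : ℝ → ℂ :=
  fun t => ∑ i ∈ Finset.Icc 1 m, σ i t * prabI α (β 0 - β i) (θ 0 - θ i) ω 0 w t

/-!
Expanding the Mittag-Leffler function in the kernel gives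
`(t - s)^(β-1) E^θ_{α,β}(ω (t - s)^α) = ∑ (θ)ₙ ωⁿ / n! · (t - s)^(αn+β-1) / Γ(αn+β)`,
and integrating term by term gives the series of Riemann–Liouville integrals. The interchange
is justified once `∑ₙ ∫ ‖n-th term‖` converges, which for bounded `f` reduces to the absolute
convergence of the Mittag-Leffler series. For that, iterating `Γ(z) Γ(w) = Γ(z+w) B(z,w)` with
`‖B(z,w)‖ ≤ B(Re z, Re w)` gives `‖Γ(αn+β)‖ ≥ C qⁿ Γ(n Re α + Re β)`, and the resulting real series
passes the ratio test because log-convexity of `Γ` gives `Γ(x + r) ≥ Γ(x) (x - 1)^r`.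
-/

theorem Real.Gamma_mul_rpow_le_Gamma_add {x r : ℝ} (hx : 1 < x) (hr : 0 < r) :
    Real.Gamma x * (x - 1) ^ r ≤ Real.Gamma (x + r) := by
  -- slopes of `log ∘ Γ` increase, and its slope on `[x - 1, x]` is `log (x - 1)`
  have hslope := (convexOn_iff_slope_mono_adjacent.mp Real.convexOn_log_Gamma).2
    (show x - 1 ∈ Ioi 0 by simpa using hx) (show x + r ∈ Ioi 0 by simp only [mem_Ioi]; linarith)
    (sub_one_lt x) (lt_add_of_pos_right x hr)
  have hGx : Real.Gamma x = (x - 1) * Real.Gamma (x - 1) := by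
    simpa using Real.Gamma_add_one (s := x - 1) (by linarith)
  have hΓ₀ : 0 < Real.Gamma (x - 1) := Real.Gamma_pos_of_pos (by linarith)
  have hΓ₁ : 0 < Real.Gamma x := Real.Gamma_pos_of_pos (by linarith)
  have hΓ₂ : 0 < Real.Gamma (x + r) := Real.Gamma_pos_of_pos (by linarith)
  have hlog : Real.log (Real.Gamma x) - Real.log (Real.Gamma (x - 1)) = Real.log (x - 1) := by
    rw [hGx, Real.log_mul (by linarith) hΓ₀.ne', add_sub_cancel_right]
  simp only [Function.comp_apply, sub_sub_cancel, div_one, add_sub_cancel_left, hlog,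
    le_div_iff₀ hr] at hslope
  rw [Real.rpow_def_of_pos (by linarith), ← Real.exp_log hΓ₁, ← Real.exp_add,
    ← Real.exp_log hΓ₂]
  exact Real.exp_le_exp.mpr (by linarith)

theorem Complex.norm_betaIntegral_le (u v : ℂ) :
    ‖Complex.betaIntegral u v‖ ≤ ‖Complex.betaIntegral u.re v.re‖ := by
  set g : ℝ → ℝ := fun x => x ^ (u.re - 1) * (1 - x) ^ (v.re - 1)
  have hIoo (w z : ℂ) : Complex.betaIntegral w z =
      ∫ x in Ioo (0 : ℝ) 1, (x : ℂ) ^ (w - 1) * (1 - (x : ℂ)) ^ (z - 1) := by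
    rw [Complex.betaIntegral, intervalIntegral.integral_of_le zero_le_one,
      integral_Ioc_eq_integral_Ioo]
  have hle : ‖Complex.betaIntegral u v‖ ≤ ∫ x in Ioo (0 : ℝ) 1, g x := by
    rw [hIoo]
    refine (norm_integral_le_integral_norm _).trans_eq
      (setIntegral_congr_fun measurableSet_Ioo fun x ⟨hx₀, hx₁⟩ => ?_)
    rw [norm_mul, Complex.norm_cpow_eq_rpow_re_of_pos hx₀, ← Complex.ofReal_one,
      ← Complex.ofReal_sub, Complex.norm_cpow_eq_rpow_re_of_pos (sub_pos.mpr hx₁)]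
    simp [g]
  have hre : Complex.betaIntegral u.re v.re = ((∫ x in Ioo (0 : ℝ) 1, g x : ℝ) : ℂ) := by
    rw [hIoo, ← integral_complex_ofReal]
    refine setIntegral_congr_fun measurableSet_Ioo fun x ⟨hx₀, hx₁⟩ => ?_
    simp only [g, Complex.ofReal_mul, Complex.ofReal_cpow hx₀.le,
      Complex.ofReal_cpow (sub_pos.mpr hx₁).le]
    push_cast
    rfl
  rw [hre, Complex.norm_real, Real.norm_eq_abs]
  exact hle.trans (le_abs_self _)

theorem Complex.norm_Gamma_div_mul_le {z w : ℂ} (hz : 0 < z.re) (hw : 0 < w.re) :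
    ‖Complex.Gamma z‖ / Real.Gamma z.re * (‖Complex.Gamma w‖ / Real.Gamma w.re) ≤
      ‖Complex.Gamma (z + w)‖ / Real.Gamma (z + w).re := by
  have hzw : 0 < (z + w).re := by rw [Complex.add_re]; positivity
  have hB := Complex.norm_betaIntegral_le z w
  rw [Complex.betaIntegral_eq_Gamma_mul_div _ _ hz hw,
    Complex.betaIntegral_eq_Gamma_mul_div _ _ (by simpa) (by simpa), ← Complex.ofReal_add,
    Complex.Gamma_ofReal, Complex.Gamma_ofReal, Complex.Gamma_ofReal, ← Complex.add_re] at hB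
  have hΓz := Real.Gamma_pos_of_pos hz
  have hΓw := Real.Gamma_pos_of_pos hw
  have hΓzw := Real.Gamma_pos_of_pos hzw
  simp only [norm_div, norm_mul, Complex.norm_real, Real.norm_of_nonneg hΓz.le,
    Real.norm_of_nonneg hΓw.le, Real.norm_of_nonneg hΓzw.le] at hB
  rw [div_le_div_iff₀ (norm_pos_iff.mpr (Complex.Gamma_ne_zero_of_re_pos hzw)) hΓzw] at hB
  rw [div_mul_div_comm, div_le_div_iff₀ (by positivity) hΓzw]
  linarith

theorem Complex.norm_Gamma_div_mul_pow_le {α β : ℂ} (hα : 0 < α.re) (hβ : 0 < β.re) (n : ℕ) :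
    ‖Complex.Gamma β‖ / Real.Gamma β.re * (‖Complex.Gamma α‖ / Real.Gamma α.re) ^ n ≤
      ‖Complex.Gamma (α * n + β)‖ / Real.Gamma (α.re * n + β.re) := by
  induction n with
  | zero => simp
  | succ n ih =>
    have hre : (α * n + β).re = α.re * n + β.re := by simp
    have hstep :=
      Complex.norm_Gamma_div_mul_le (z := α * n + β) (w := α) (by rw [hre]; positivity) hα
    rw [hre] at hstep
    have harg : α * (n + 1 : ℕ) + β = α * n + β + α := by push_cast; ring
    have harg_re : α.re * (n + 1 : ℕ) + β.re = (α * n + β + α).re := by simp; ring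
    rw [pow_succ, ← mul_assoc, harg, harg_re]
    exact (mul_le_mul_of_nonneg_right ih (by positivity)).trans hstep

theorem summable_norm_cpoch_mul_pow_div_factorial_mul_Gamma (θ : ℂ) {r b Q : ℝ} (hr : 0 < r)
    (hb : 0 < b) (hQ : 0 ≤ Q) :
    Summable fun n : ℕ => ‖cpoch θ n‖ * Q ^ n / ((n.factorial : ℝ) * Real.Gamma (r * n + b)) := by
  have hx : Tendsto (fun n : ℕ => r * n + b) atTop atTop :=
    tendsto_atTop_add_const_right _ b (tendsto_natCast_atTop_atTop.const_mul_atTop hr)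
  have hgrowth : ∀ᶠ n : ℕ in atTop,
      1 < r * n + b ∧ 2 * ((‖θ‖ + 1) * Q) ≤ (r * n + b - 1) ^ r :=
    (hx.eventually_gt_atTop 1).and <| ((tendsto_rpow_atTop hr).comp
      (tendsto_atTop_add_const_right _ (-1) hx)).eventually_ge_atTop _
  refine summable_of_ratio_norm_eventually_le (r := 1 / 2) (by norm_num) ?_
  filter_upwards [hgrowth] with n ⟨hx₁, hQ_le⟩
  set x := r * n + b
  have hΓx : 0 < Real.Gamma x := Real.Gamma_pos_of_pos (by linarith)
  have hθn : ‖θ + n‖ ≤ (‖θ‖ + 1) * (n + 1) := by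
    have := norm_add_le θ n
    rw [Complex.norm_natCast] at this
    nlinarith [norm_nonneg θ]
  have hratio : ‖θ + n‖ * Q * Real.Gamma x * 2 ≤ (n + 1) * Real.Gamma (x + r) := by
    calc ‖θ + n‖ * Q * Real.Gamma x * 2
        ≤ (‖θ‖ + 1) * (n + 1) * Q * Real.Gamma x * 2 := by gcongr
      _ = (n + 1) * (Real.Gamma x * (2 * ((‖θ‖ + 1) * Q))) := by ring
      _ ≤ (n + 1) * (Real.Gamma x * (x - 1) ^ r) := by gcongr
      _ ≤ (n + 1) * Real.Gamma (x + r) := by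
        gcongr; exact Real.Gamma_mul_rpow_le_Gamma_add hx₁ hr
  have hcpoch : cpoch θ (n + 1) = cpoch θ n * (θ + n) := Finset.prod_range_succ _ _
  have harg : r * (n + 1 : ℕ) + b = x + r := by push_cast; ring
  rw [Real.norm_of_nonneg (by positivity), Real.norm_of_nonneg (by positivity), hcpoch, harg,
    Nat.factorial_succ, norm_mul]
  push_cast
  calc ‖cpoch θ n‖ * ‖θ + n‖ * Q ^ (n + 1) / ((n + 1) * (n.factorial : ℝ) * Real.Gamma (x + r))
      = ‖cpoch θ n‖ * Q ^ n / (n.factorial : ℝ) *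
          (‖θ + n‖ * Q / ((n + 1) * Real.Gamma (x + r))) := by
        field_simp; ring
    _ ≤ ‖cpoch θ n‖ * Q ^ n / (n.factorial : ℝ) * (1 / 2 / Real.Gamma x) := by
        refine mul_le_mul_of_nonneg_left ?_ (by positivity)
        rw [div_le_div_iff₀ (by positivity) hΓx]
        linarith
    _ = 1 / 2 * (‖cpoch θ n‖ * Q ^ n / ((n.factorial : ℝ) * Real.Gamma x)) := by ring

theorem summable_norm_mlThree_series (θ : ℂ) {α β : ℂ} (hα : 0 < α.re) (hβ : 0 < β.re) (z : ℂ) :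
    Summable fun n : ℕ =>
      ‖cpoch θ n * (Complex.Gamma (α * n + β))⁻¹ * z ^ n / (n.factorial : ℂ)‖ := by
  set q := ‖Complex.Gamma α‖ / Real.Gamma α.re
  set D := ‖Complex.Gamma β‖ / Real.Gamma β.re
  have hq : 0 < q := div_pos (norm_pos_iff.mpr (Complex.Gamma_ne_zero_of_re_pos hα))
    (Real.Gamma_pos_of_pos hα)
  have hD : 0 < D := div_pos (norm_pos_iff.mpr (Complex.Gamma_ne_zero_of_re_pos hβ))
    (Real.Gamma_pos_of_pos hβ)
  have hlow (n : ℕ) : D * q ^ n * Real.Gamma (α.re * n + β.re) ≤ ‖Complex.Gamma (α * n + β)‖ :=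
    (le_div_iff₀ (Real.Gamma_pos_of_pos (by positivity))).mp
      (Complex.norm_Gamma_div_mul_pow_le hα hβ n)
  clear_value q D
  refine Summable.of_nonneg_of_le (fun n => norm_nonneg _) (fun n => ?_)
    ((summable_norm_cpoch_mul_pow_div_factorial_mul_Gamma θ hα hβ
      (div_nonneg (norm_nonneg z) hq.le)).mul_left D⁻¹)
  set G := Real.Gamma (α.re * n + β.re)
  rw [norm_div, norm_mul, norm_mul, norm_inv, norm_pow, Complex.norm_natCast]
  calc ‖cpoch θ n‖ * ‖Complex.Gamma (α * n + β)‖⁻¹ * ‖z‖ ^ n / (n.factorial : ℝ)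
      ≤ ‖cpoch θ n‖ * (D * q ^ n * G)⁻¹ * ‖z‖ ^ n / (n.factorial : ℝ) := by
        gcongr; exact hlow n
    _ = D⁻¹ * (‖cpoch θ n‖ * (‖z‖ / q) ^ n / ((n.factorial : ℝ) * G)) := by
        rw [div_pow]; field_simp

section RiemannLiouvilleKernel

variable {a t : ℝ} {γ : ℂ} {f : ℝ → ℂ} {M : ℝ}

theorem integrableOn_sub_rpow (hat : a ≤ t) {c : ℝ} (hc : 0 < c) :
    IntegrableOn (fun s => (t - s) ^ (c - 1)) (Ioo a t) := by
  have h := ((intervalIntegral.intervalIntegrable_rpow' (r := c - 1) (by linarith)).comp_sub_left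
    t (a := 0) (b := t - a)).symm
  rw [sub_zero, sub_sub_cancel] at h
  exact (intervalIntegrable_iff_integrableOn_Ioo_of_le hat).mp h

theorem integral_Ioo_sub_rpow (hat : a ≤ t) {c : ℝ} (hc : 0 < c) :
    ∫ s in Ioo a t, (t - s) ^ (c - 1) = (t - a) ^ c / c := by
  rw [← integral_Ioc_eq_integral_Ioo, ← intervalIntegral.integral_of_le hat,
    intervalIntegral.integral_comp_sub_left (fun u => u ^ (c - 1)), sub_self,
    integral_rpow (Or.inl (by linarith)), sub_add_cancel, Real.zero_rpow hc.ne', sub_zero]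

theorem norm_sub_cpow_mul_le {s : ℝ} (hs : s < t) (hM : ‖f s‖ ≤ M) :
    ‖((t - s : ℝ) : ℂ) ^ (γ - 1) * f s‖ ≤ M * (t - s) ^ (γ.re - 1) := by
  rw [norm_mul, Complex.norm_cpow_eq_rpow_re_of_pos (sub_pos.mpr hs), Complex.sub_re,
    Complex.one_re, mul_comm M]
  gcongr

theorem integrableOn_sub_cpow_mul (hat : a ≤ t) (hγ : 0 < γ.re)
    (hf : AEStronglyMeasurable f (volume.restrict (Ioo a t))) (hM : ∀ s ∈ Ioo a t, ‖f s‖ ≤ M) :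
    IntegrableOn (fun s => ((t - s : ℝ) : ℂ) ^ (γ - 1) * f s) (Ioo a t) := by
  refine Integrable.mono' ((integrableOn_sub_rpow hat hγ).const_mul M) ?_ ?_
  · exact ((measurable_const.sub measurable_id).complex_ofReal.pow_const _).aestronglyMeasurable.mul
      hf
  · exact (ae_restrict_iff' measurableSet_Ioo).mpr
      (Eventually.of_forall fun s hs => norm_sub_cpow_mul_le hs.2 (hM s hs))

theorem integral_norm_sub_cpow_mul_le (hat : a ≤ t) (hγ : 0 < γ.re)
    (hf : AEStronglyMeasurable f (volume.restrict (Ioo a t))) (hM : ∀ s ∈ Ioo a t, ‖f s‖ ≤ M) :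
    ∫ s in Ioo a t, ‖((t - s : ℝ) : ℂ) ^ (γ - 1) * f s‖ ≤ M * ((t - a) ^ γ.re / γ.re) := by
  rw [← integral_Ioo_sub_rpow hat hγ, ← integral_const_mul]
  exact setIntegral_mono_on (integrableOn_sub_cpow_mul hat hγ hf hM).norm
    ((integrableOn_sub_rpow hat hγ).const_mul M) measurableSet_Ioo
    fun s hs => norm_sub_cpow_mul_le hs.2 (hM s hs)

end RiemannLiouvilleKernel

theorem cpow_sub_one_mul_mlThree {x : ℂ} (hx : x ≠ 0) (α β θ ω : ℂ) :
    x ^ (β - 1) * mlThree α β θ (ω * x ^ α) =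
      ∑' n : ℕ, cpoch θ n * ω ^ n / (n.factorial : ℂ) *
        ((Complex.Gamma (α * n + β))⁻¹ * x ^ (α * n + β - 1)) := by
  rw [mlThree, ← tsum_mul_left]
  congr 1 with n
  rw [show α * n + β - 1 = β - 1 + n * α by ring, Complex.cpow_add _ _ hx,
    Complex.cpow_nat_mul, mul_pow]
  ring

theorem rpow_div_le_rpow_div_mul_pow {u : ℝ} (hu : 0 ≤ u) {r b : ℝ} (hr : 0 ≤ r) (hb : 0 < b)
    (n : ℕ) : u ^ (r * n + b) / (r * n + b) ≤ u ^ b / b * (u ^ r) ^ n := by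
  have hn : 0 ≤ r * n := mul_nonneg hr n.cast_nonneg
  calc u ^ (r * n + b) / (r * n + b) = u ^ b * (u ^ r) ^ n / (r * n + b) := by
        rw [Real.rpow_add_of_nonneg hu hn hb.le, Real.rpow_mul_natCast hu, mul_comm]
    _ ≤ u ^ b * (u ^ r) ^ n / b := by gcongr; linarith
    _ = u ^ b / b * (u ^ r) ^ n := by ring

theorem hasSum_rlI_prabI_of_norm_le {α β : ℂ} (hα : 0 < α.re) (hβ : 0 < β.re) (θ ω : ℂ) {a t : ℝ}
    (hat : a ≤ t) {f : ℝ → ℂ} (hf : AEStronglyMeasurable f (volume.restrict (Ioo a t)))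
    {M : ℝ} (hM₀ : 0 ≤ M) (hM : ∀ s ∈ Ioo a t, ‖f s‖ ≤ M) :
    HasSum (fun n : ℕ => cpoch θ n * ω ^ n / (n.factorial : ℂ) * rlI (α * n + β) a f t)
      (prabI α β θ ω a f t) := by
  have hre (n : ℕ) : (α * n + β).re = α.re * n + β.re := by simp
  have hpos (n : ℕ) : 0 < (α * n + β).re := by rw [hre]; positivity
  set c : ℕ → ℂ := fun n => cpoch θ n * ω ^ n / (n.factorial : ℂ)
  set g : ℕ → ℝ → ℂ := fun n s => ((t - s : ℝ) : ℂ) ^ (α * n + β - 1) * f s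
  set F : ℕ → ℝ → ℂ := fun n s => c n * ((Complex.Gamma (α * n + β))⁻¹ * g n s)
  have hg (n : ℕ) : IntegrableOn (g n) (Ioo a t) := integrableOn_sub_cpow_mul hat (hpos n) hf hM
  have hF_norm (n : ℕ) : ∫ s in Ioo a t, ‖F n s‖ ≤
      M * (t - a) ^ β.re / β.re * ‖cpoch θ n * (Complex.Gamma (α * n + β))⁻¹ *
        (ω * ((t - a : ℝ) : ℂ) ^ α) ^ n / (n.factorial : ℂ)‖ := by
    have hg_norm : ∫ s in Ioo a t, ‖g n s‖ ≤ M * ((t - a) ^ β.re / β.re * ((t - a) ^ α.re) ^ n) :=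
      (integral_norm_sub_cpow_mul_le hat (hpos n) hf hM).trans <| by
        rw [hre]; gcongr; exact rpow_div_le_rpow_div_mul_pow (sub_nonneg.mpr hat) hα.le hβ n
    have hz : ‖(ω * ((t - a : ℝ) : ℂ) ^ α) ^ n‖ = ‖ω‖ ^ n * ((t - a) ^ α.re) ^ n := by
      rw [norm_pow, norm_mul, Complex.norm_cpow_eq_rpow_re_of_nonneg (sub_nonneg.mpr hat) hα.ne',
        mul_pow]
    calc ∫ s in Ioo a t, ‖F n s‖
        = ‖c n‖ * ‖(Complex.Gamma (α * n + β))⁻¹‖ * ∫ s in Ioo a t, ‖g n s‖ := by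
          simp only [F, norm_mul, integral_const_mul, mul_assoc]
      _ ≤ ‖c n‖ * ‖(Complex.Gamma (α * n + β))⁻¹‖ *
            (M * ((t - a) ^ β.re / β.re * ((t - a) ^ α.re) ^ n)) := by gcongr
      _ = _ := by
          simp only [c, norm_div, norm_mul, hz, norm_pow]
          ring
  have hsum := hasSum_integral_of_summable_integral_norm (fun n => ((hg n).const_mul _).const_mul _)
    (Summable.of_nonneg_of_le (fun n => integral_nonneg fun s => norm_nonneg (F n s)) hF_norm
      ((summable_norm_mlThree_series θ hα hβ _).mul_left _))
  have hIoo (h : ℝ → ℂ) : ∫ s in a..t, h s = ∫ s in Ioo a t, h s := by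
    rw [intervalIntegral.integral_of_le hat, integral_Ioc_eq_integral_Ioo]
  have hterms : (fun n : ℕ => c n * rlI (α * n + β) a f t) = fun n => ∫ s in Ioo a t, F n s := by
    ext n
    simp only [F, g, integral_const_mul, rlI, hIoo]
  have hprab : prabI α β θ ω a f t = ∫ s in Ioo a t, ∑' n, F n s := by
    rw [prabI, hIoo]
    refine setIntegral_congr_fun measurableSet_Ioo fun s hs => ?_
    rw [cpow_sub_one_mul_mlThree (Complex.ofReal_ne_zero.mpr (sub_pos.mpr hs.2).ne'),
      ← tsum_mul_right]
    simp only [F, g, c, mul_assoc]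
  rw [hterms, hprab]
  exact hsum

theorem prabI_eq_series_of_rlI_general (α β θ ω : ℂ) (hα : 0 < α.re) (hβ : 0 < β.re)
    (a b : ℝ) (f : ℝ → ℂ) (hf : ContinuousOn f (Set.Icc a b)) :
    ∀ t ∈ Set.Icc a b,
      HasSum (fun n : ℕ => cpoch θ n * ω ^ n / (n.factorial : ℂ) * rlI (α * n + β) a f t)
        (prabI α β θ ω a f t) := by
  intro t ht
  have hsub : Ioo a t ⊆ Icc a b := Ioo_subset_Icc_self.trans (Icc_subset_Icc_right ht.2)
  obtain ⟨M, hM⟩ := isCompact_Icc.exists_bound_of_continuousOn hf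
  exact hasSum_rlI_prabI_of_norm_le hα hβ θ ω ht.1
    ((hf.mono hsub).aestronglyMeasurable measurableSet_Ioo)
    ((norm_nonneg _).trans (hM a (left_mem_Icc.mpr (ht.1.trans ht.2))))
    fun s hs => hM s (hsub hs)

/-- Series formula for the Prabhakar integral in terms of Riemann–Liouville integrals:
`(𝕀^θ_{α,β,ω;a} f)(t) = ∑_{n=0}^∞ ((θ)ₙ ωⁿ/n!) (I^{αn+β}_a f)(t)`, the series converging. -/
theorem prabI_eq_series_of_rlI (α β θ ω : ℂ) (hα : 0 < α.re) (hβ : 0 < β.re)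
    (a b : ℝ) (hab : a < b) (f : ℝ → ℂ) (hf : ContinuousOn f (Set.Icc a b)) :
    ∀ t ∈ Set.Icc a b,
      HasSum (fun n : ℕ => cpoch θ n * ω ^ n / (n.factorial : ℂ) * rlI (α * n + β) a f t)
        (prabI α β θ ω a f t) :=
  prabI_eq_series_of_rlI_general α β θ ω hα hβ a b f hf

end
end

section
/- (Lemma 2.1, part 1.) Let α, β, θ, ω ∈ ℂ with Re α > 0 and Re β > 0, let a < b be reals, and let f : [a,b] → ℂ be continuous. Then the function t ↦ (𝕀^θ_{α,β,ω;a}f)(t) is continuous on [a,b] (with value 0 at t = a). -/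
open MeasureTheory Set Filter Topology

noncomputable section

/-!
The Prabhakar integral is a Volterra integral `∫_a^t K(t-s) f(s) ds` with kernel
`K(u) = u^{β-1} E^θ_{α,β}(ω u^α)`. Such an integral is continuous in `t` as soon as `K` is
integrable near `0` and `f` is continuous: after the substitution `u = t - s` it becomes an
integral over a fixed interval of an integrand that, for almost every `u`, is continuous in `t`,
and which is dominated by `‖K u‖ · sup |f|`. The kernel is integrable because `E^θ_{α,β}` is entire,
hence bounded on compacts, and `u^{β-1}` is integrable for `Re β > 0`. That the series of
`E^θ_{α,β}` converges everywhere follows from the ratio test: by the Beta integral,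
`Γ(w)/Γ(w+α) = B(w,α)/Γ(α)`, and `B(w,α) → 0` as `Re w → ∞`.
-/

section Volterra

variable {E : Type*} [NormedRing E] [NormedSpace ℝ E]

theorem continuous_integral_indicator_Iic_mul {K g : ℝ → E} {s : Set ℝ}
    (hK : IntegrableOn K s) (hg : Continuous g) {C : ℝ} (hC : ∀ x, ‖g x‖ ≤ C) (c : ℝ) :
    Continuous fun t => ∫ u in s, (Iic (t - c)).indicator (fun u => K u * g (t - u)) u := by
  refine continuous_iff_continuousAt.2 fun t₀ =>
    continuousAt_of_dominated (bound := fun u => ‖K u‖ * C) ?_ ?_ (hK.norm.mul_const C) ?_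
  · exact Eventually.of_forall fun t => (hK.aestronglyMeasurable.mul
      (hg.comp (continuous_sub_left t)).aestronglyMeasurable).indicator measurableSet_Iic
  · refine Eventually.of_forall fun t => Eventually.of_forall fun u => ?_
    refine le_trans (norm_indicator_le_norm_self _ _) ((norm_mul_le _ _).trans ?_)
    gcongr
    exact hC _
  · filter_upwards [ae_restrict_of_ae (Measure.ae_ne volume (t₀ - c))] with u hu
    rcases hu.lt_or_gt with hlt | hgt
    · have hcont : Continuous fun t => K u * g (t - u) :=
        continuous_const.mul (hg.comp (continuous_sub_right u))
      refine hcont.continuousAt.congr ?_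
      filter_upwards [lt_mem_nhds (show u + c < t₀ by linarith)] with t ht
      exact (indicator_of_mem (show u ∈ Iic (t - c) from mem_Iic.2 (by linarith))
        (fun u => K u * g (t - u))).symm
    · refine (continuousAt_const (y := (0 : E))).congr ?_
      filter_upwards [gt_mem_nhds (show t₀ < u + c by linarith)] with t ht
      exact (indicator_of_notMem (show u ∉ Iic (t - c) from fun h => by linarith [mem_Iic.1 h])
        (fun u => K u * g (t - u))).symm

theorem continuousOn_intervalIntegral_mul_sub {K f : ℝ → E} {a b : ℝ}
    (hK : IntegrableOn K (Ioc 0 (b - a))) (hf : ContinuousOn f (Icc a b)) :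
    ContinuousOn (fun t => ∫ s in a..t, K (t - s) * f s) (Icc a b) := by
  rcases lt_or_ge b a with hba | hab
  · simp [Icc_eq_empty_of_lt hba]
  obtain ⟨C, hC⟩ := isCompact_Icc.exists_bound_of_continuousOn hf
  -- extend `f` continuously to `ℝ` by clamping, so that the integrand is continuous in `t`
  set g : ℝ → E := fun x => f (projIcc a b hab x)
  have hg : Continuous g :=
    hf.comp_continuous (continuous_subtype_val.comp continuous_projIcc) fun x =>
      (projIcc a b hab x).2
  refine (continuous_integral_indicator_Iic_mul hK hg (fun x => hC _ (projIcc a b hab x).2)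
    a).continuousOn.congr fun t ht => ?_
  calc ∫ s in a..t, K (t - s) * f s = ∫ s in a..t, K (t - s) * g s := by
        refine intervalIntegral.integral_congr fun s hs => ?_
        rw [uIcc_of_le ht.1] at hs
        simp only [g, projIcc_of_mem hab ⟨hs.1, hs.2.trans ht.2⟩]
    _ = ∫ u in 0..t - a, K u * g (t - u) := by
        simpa only [sub_sub_cancel, sub_self] using
          intervalIntegral.integral_comp_sub_left (a := a) (b := t) (fun u => K u * g (t - u)) t
    _ = ∫ u in Ioc 0 (t - a), K u * g (t - u) :=
        intervalIntegral.integral_of_le (by linarith [ht.1])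
    _ = ∫ u in Ioc 0 (b - a), (Iic (t - a)).indicator (fun u => K u * g (t - u)) u := by
        rw [setIntegral_indicator measurableSet_Iic, Ioc_inter_Iic,
          min_eq_right (by linarith [ht.2])]

end Volterra

namespace Complex

theorem inv_Gamma_add_eq {u v : ℂ} (hu : 0 < u.re) (hv : 0 < v.re) :
    (Gamma (u + v))⁻¹ = betaIntegral u v * (Gamma u)⁻¹ * (Gamma v)⁻¹ := by
  have huv : 0 < (u + v).re := by rw [add_re]; linarith
  rw [betaIntegral_eq_Gamma_mul_div u v hu hv]
  field_simp [Gamma_ne_zero_of_re_pos hu, Gamma_ne_zero_of_re_pos hv,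
    Gamma_ne_zero_of_re_pos huv]

theorem norm_betaIntegral_le_s6 (u v : ℂ) :
    ‖betaIntegral u v‖ ≤ ∫ x in (0 : ℝ)..1, x ^ (u.re - 1) * (1 - x) ^ (v.re - 1) := by
  refine (intervalIntegral.norm_integral_le_integral_norm zero_le_one).trans_eq ?_
  refine intervalIntegral.integral_congr_ae ?_
  filter_upwards [Measure.ae_ne volume 1] with x hx1 hx
  rw [uIoc_of_le zero_le_one] at hx
  have hx' : 0 < 1 - x := sub_pos.2 (lt_of_le_of_ne hx.2 hx1)
  rw [norm_mul, ← ofReal_one, ← ofReal_sub, norm_cpow_eq_rpow_re_of_pos hx.1,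
    norm_cpow_eq_rpow_re_of_pos hx']
  simp

end Complex

theorem tendsto_integral_rpow_mul_one_sub_rpow_atTop {c : ℝ} (hc : 0 < c) :
    Tendsto (fun y : ℝ => ∫ x in (0 : ℝ)..1, x ^ (y - 1) * (1 - x) ^ (c - 1)) atTop (𝓝 0) := by
  have hbound : IntervalIntegrable (fun x : ℝ => (1 - x) ^ (c - 1)) volume 0 1 := by
    simpa using ((intervalIntegral.intervalIntegrable_rpow' (r := c - 1) (a := 0) (b := 1)
      (by linarith)).comp_sub_left 1).symm
  have hdom : ∀ᶠ y : ℝ in atTop, ∀ᵐ x, x ∈ uIoc (0 : ℝ) 1 →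
      ‖x ^ (y - 1) * (1 - x) ^ (c - 1)‖ ≤ (1 - x) ^ (c - 1) := by
    filter_upwards [eventually_ge_atTop 1] with y hy
    refine Eventually.of_forall fun x hx => ?_
    rw [uIoc_of_le zero_le_one] at hx
    have h1 : 0 ≤ (1 - x) ^ (c - 1) := Real.rpow_nonneg (by linarith [hx.2]) _
    rw [Real.norm_of_nonneg (mul_nonneg (Real.rpow_nonneg hx.1.le _) h1)]
    exact mul_le_of_le_one_left h1 (Real.rpow_le_one hx.1.le hx.2 (by linarith))
  have hlim : ∀ᵐ x, x ∈ uIoc (0 : ℝ) 1 →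
      Tendsto (fun y : ℝ => x ^ (y - 1) * (1 - x) ^ (c - 1)) atTop (𝓝 0) := by
    filter_upwards [Measure.ae_ne volume 1] with x hx1 hx
    rw [uIoc_of_le zero_le_one] at hx
    have hpow := tendsto_rpow_atTop_of_base_lt_one x (by linarith [hx.1])
      (lt_of_le_of_ne hx.2 hx1)
    simpa [sub_eq_add_neg] using
      (hpow.comp (tendsto_atTop_add_const_right _ (-1) tendsto_id)).mul_const
      ((1 - x) ^ (c - 1))
  simpa using intervalIntegral.tendsto_integral_filter_of_dominated_convergence
    _ (Eventually.of_forall fun y => by fun_prop) hdom hbound hlim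

def mlThreeTerm (α β θ : ℂ) (n : ℕ) (z : ℂ) : ℂ :=
  cpoch θ n * (Complex.Gamma (α * n + β))⁻¹ * z ^ n / (n.factorial : ℂ)

section MittagLeffler

variable {α β θ : ℂ}

theorem mlThreeTerm_succ (hα : 0 < α.re) {n : ℕ} (hn : 0 < (α * n + β).re) (z : ℂ) :
    mlThreeTerm α β θ (n + 1) z = mlThreeTerm α β θ n z *
      ((θ + n) / (n + 1) * z * (Complex.betaIntegral (α * n + β) α / Complex.Gamma α)) := by
  have hshift : α * ((n + 1 : ℕ) : ℂ) + β = (α * n + β) + α := by push_cast; ring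
  simp only [mlThreeTerm, cpoch, Finset.prod_range_succ, hshift, Complex.inv_Gamma_add_eq hn hα,
    Nat.factorial_succ, pow_succ]
  push_cast
  field_simp

theorem norm_mlThreeTerm_le_of_norm_le (n : ℕ) {z w : ℂ} (h : ‖w‖ ≤ ‖z‖) :
    ‖mlThreeTerm α β θ n w‖ ≤ ‖mlThreeTerm α β θ n z‖ := by
  simp only [mlThreeTerm, norm_div, norm_mul, norm_pow]
  gcongr

theorem summable_norm_mlThreeTerm (hα : 0 < α.re) (z : ℂ) :
    Summable fun n => ‖mlThreeTerm α β θ n z‖ := by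
  set ρ := (‖θ‖ + 1) * ‖z‖ / ‖Complex.Gamma α‖
  set B : ℝ → ℝ := fun y => ∫ x in (0 : ℝ)..1, x ^ (y - 1) * (1 - x) ^ (α.re - 1)
  have hre : Tendsto (fun n : ℕ => (α * n + β).re) atTop atTop := by
    simp only [Complex.add_re, Complex.mul_re, Complex.natCast_re, Complex.natCast_im, mul_zero,
      sub_zero]
    exact tendsto_atTop_add_const_right _ _
      (tendsto_natCast_atTop_atTop.const_mul_atTop hα)
  have hsmall : ∀ᶠ n : ℕ in atTop, 0 < (α * n + β).re ∧ ρ * B (α * n + β).re ≤ 1 / 2 := by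
    have hρB : Tendsto (fun n : ℕ => ρ * B (α * n + β).re) atTop (𝓝 0) := by
      simpa using ((tendsto_integral_rpow_mul_one_sub_rpow_atTop hα).comp hre).const_mul ρ
    exact (hre.eventually_gt_atTop 0).and (hρB.eventually_le_const (by norm_num))
  refine summable_of_ratio_norm_eventually_le (r := 1 / 2) (by norm_num) ?_
  filter_upwards [hsmall] with n ⟨hpos, hle⟩
  have hpoch : ‖(θ + n) / (n + 1)‖ ≤ ‖θ‖ + 1 := by
    have hn1 : ‖(n + 1 : ℂ)‖ = n + 1 := by exact_mod_cast Complex.norm_natCast (n + 1)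
    rw [norm_div, hn1, div_le_iff₀ (by positivity)]
    calc ‖θ + n‖ ≤ ‖θ‖ + n := (norm_add_le _ _).trans (by simp)
      _ ≤ (‖θ‖ + 1) * (n + 1) := by nlinarith [norm_nonneg θ]
  have hratio : ‖(θ + n) / (n + 1) * z * (Complex.betaIntegral (α * n + β) α /
      Complex.Gamma α)‖ ≤ ρ * B (α * n + β).re := by
    have hB := Complex.norm_betaIntegral_le_s6 (α * n + β) α
    rw [norm_mul, norm_mul, norm_div (Complex.betaIntegral _ _)]
    calc _ ≤ (‖θ‖ + 1) * ‖z‖ * (B (α * n + β).re / ‖Complex.Gamma α‖) := by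
          gcongr
      _ = ρ * B (α * n + β).re := by ring
  rw [norm_norm, norm_norm, mlThreeTerm_succ hα hpos, norm_mul]
  calc _ ≤ ‖mlThreeTerm α β θ n z‖ * (1 / 2) := by gcongr; exact hratio.trans hle
    _ = 1 / 2 * ‖mlThreeTerm α β θ n z‖ := mul_comm _ _

theorem continuous_mlThree (hα : 0 < α.re) : Continuous (mlThree α β θ) := by
  refine continuous_iff_continuousAt.2 fun z => ?_
  have hR : ‖((‖z‖ + 1 : ℝ) : ℂ)‖ = ‖z‖ + 1 := by
    rw [Complex.norm_real, Real.norm_of_nonneg (by positivity)]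
  have hball : ContinuousOn (fun w => ∑' n, mlThreeTerm α β θ n w) (Metric.ball 0 (‖z‖ + 1)) :=
    continuousOn_tsum (fun n => by unfold mlThreeTerm; fun_prop)
      (summable_norm_mlThreeTerm hα ((‖z‖ + 1 : ℝ) : ℂ)) fun n w hw =>
        norm_mlThreeTerm_le_of_norm_le n ((mem_ball_zero_iff.1 hw).le.trans_eq hR.symm)
  exact hball.continuousAt (Metric.isOpen_ball.mem_nhds (by simp))

end MittagLeffler

def prabKernel (α β θ ω : ℂ) (u : ℝ) : ℂ :=
  (u : ℂ) ^ (β - 1) * mlThree α β θ (ω * (u : ℂ) ^ α)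

theorem integrableOn_prabKernel {α β : ℂ} (θ ω : ℂ) (hα : 0 < α.re) (hβ : 0 < β.re) (L : ℝ) :
    IntegrableOn (prabKernel α β θ ω) (Icc 0 L) := by
  have hpow : IntegrableOn (fun u : ℝ => (u : ℂ) ^ (β - 1)) (Icc 0 L) := by
    rw [integrableOn_Icc_iff_integrableOn_Ioc]
    exact (intervalIntegral.intervalIntegrable_cpow' (by simp; linarith)).1
  exact hpow.mul_continuousOn ((continuous_mlThree hα).comp
    (continuous_const.mul (Complex.continuous_ofReal_cpow_const hα))).continuousOn isCompact_Icc

theorem prabI_continuousOn_general (α β θ ω : ℂ) (hα : 0 < α.re) (hβ : 0 < β.re)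
    (a b : ℝ) (f : ℝ → ℂ) (hf : ContinuousOn f (Set.Icc a b)) :
    ContinuousOn (prabI α β θ ω a f) (Set.Icc a b) ∧ prabI α β θ ω a f a = 0 :=
  ⟨continuousOn_intervalIntegral_mul_sub (K := prabKernel α β θ ω)
      ((integrableOn_prabKernel θ ω hα hβ (b - a)).mono_set Ioc_subset_Icc_self) hf,
    intervalIntegral.integral_same⟩

/-- Lemma 2.1, part 1: for continuous `f` on `[a,b]`, the Prabhakar integral
`t ↦ (𝕀^θ_{α,β,ω;a} f)(t)` is continuous on `[a,b]`, with value `0` at `t = a`. -/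
theorem prabI_continuousOn (α β θ ω : ℂ) (hα : 0 < α.re) (hβ : 0 < β.re)
    (a b : ℝ) (hab : a < b) (f : ℝ → ℂ) (hf : ContinuousOn f (Set.Icc a b)) :
    ContinuousOn (prabI α β θ ω a f) (Set.Icc a b) ∧ prabI α β θ ω a f a = 0 :=
  prabI_continuousOn_general α β θ ω hα hβ a b f hf
end
end
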